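/- There exists a finite partially ordered set (V, ≤) with exactly 27 elements such that β_3 = 27 (three disjoint chains cover all of V), and there is a greedy chain sequence C_1, C_2, C_3 with |C_1| = 9, |C_2| = 6 and |C_3| = 4, so that the three greedy chains cover exactly 19 < (3/4)·β_3 elements. -/

import Mathlib

/-- A greedy chain sequence: pairwise disjoint chains `C 0, …, C (m-1)` such that each
`C i` has maximum cardinality among all chains contained in the complement of the
previously chosen chains. -/
def GreedyChainSeq (V : Type) [DecidableEq V] [PartialOrder V]
    {m : ℕ} (C : Fin m → Finset V) : Prop :=
  (∀ i, IsChain (· ≤ ·) ((C i : Finset V) : Set V)) ∧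
  (∀ i j, i ≠ j → Disjoint (C i) (C j)) ∧
  (∀ (i : Fin m) (D : Finset V), IsChain (· ≤ ·) ((D : Finset V) : Set V) →
    (∀ v ∈ D, ∀ j, j < i → v ∉ C j) → D.card ≤ (C i).card)

/-- `β_k`: the maximum cardinality of the union of `k` pairwise disjoint chains. -/
noncomputable def betaVal (V : Type) [Fintype V] [DecidableEq V] [PartialOrder V]
    (k : ℕ) : ℕ :=
  sSup {n : ℕ | ∃ C : Fin k → Finset V,
    (∀ i, IsChain (· ≤ ·) ((C i : Finset V) : Set V)) ∧
    (∀ i j, i ≠ j → Disjoint (C i) (C j)) ∧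
    n = (Finset.univ.biUnion C).card}

def GreedyChainsExample3 (V : Type) [Fintype V] [DecidableEq V] [PartialOrder V] : Prop :=
  Fintype.card V = 27 ∧ betaVal V 3 = 27 ∧
  ∃ C : Fin 3 → Finset V, GreedyChainSeq V C ∧
    (C 0).card = 9 ∧ (C 1).card = 6 ∧ (C 2).card = 4 ∧
    (Finset.univ.biUnion C).card = 19 ∧
    4 * (Finset.univ.biUnion C).card < 3 * betaVal V 3

/-!
The 27 elements are three rows of nine, each row a chain, so `β_3 = 27`. A few extra
comparabilities between the rows let the first greedy step take a 9-chain that runs through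
all three rows; what remains has longest chains of only 6 and then 4 elements.

Optimality of each greedy step is certified by a rank function: a map to `ℕ` that is strictly
monotone on the elements not yet covered and takes fewer than `|C_i|` values there bounds the
length of every chain in that part.
-/

theorem IsChain.card_le_of_strictMonoOn {V : Type} [PartialOrder V] {D : Finset V}
    (hD : IsChain (· ≤ ·) (D : Set V)) {f : V → ℕ} (hf : StrictMonoOn f D) {n : ℕ}
    (hlt : ∀ v ∈ D, f v < n) : D.card ≤ n := by
  have hinj : Set.InjOn f D := by
    intro x hx y hy hxy
    by_contra hne
    rcases hD hx hy hne with hle | hle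
    · exact (hf hx hy (lt_of_le_of_ne hle hne)).ne hxy
    · exact (hf hy hx (lt_of_le_of_ne hle (Ne.symm hne))).ne hxy.symm
  simpa using Finset.card_le_card_of_injOn f (t := Finset.range n)
    (fun v hv => Finset.mem_range.mpr (hlt v hv)) hinj

theorem greedyChainSeq_of_rank {V : Type} [DecidableEq V] [PartialOrder V] {m : ℕ}
    (C : Fin m → Finset V) (hchain : ∀ i, IsChain (· ≤ ·) ((C i : Finset V) : Set V))
    (hdisj : ∀ i j, i ≠ j → Disjoint (C i) (C j)) (rank : Fin m → V → ℕ)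
    (hmono : ∀ i, StrictMonoOn (rank i) {v | ∀ j < i, v ∉ C j})
    (hbound : ∀ i v, (∀ j < i, v ∉ C j) → rank i v < (C i).card) :
    GreedyChainSeq V C :=
  ⟨hchain, hdisj, fun i _ hD hfree =>
    hD.card_le_of_strictMonoOn ((hmono i).mono fun v hv j hj => hfree v hv j hj)
      fun v hv => hbound i v fun j hj => hfree v hv j hj⟩

theorem betaVal_eq_card_of_cover {V : Type} [Fintype V] [DecidableEq V] [PartialOrder V]
    {k : ℕ} (C : Fin k → Finset V) (hchain : ∀ i, IsChain (· ≤ ·) ((C i : Finset V) : Set V))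
    (hdisj : ∀ i j, i ≠ j → Disjoint (C i) (C j)) (hcover : Finset.univ.biUnion C = Finset.univ) :
    betaVal V k = Fintype.card V := by
  have hmem : Fintype.card V ∈ {n : ℕ | ∃ C : Fin k → Finset V,
      (∀ i, IsChain (· ≤ ·) ((C i : Finset V) : Set V)) ∧
      (∀ i j, i ≠ j → Disjoint (C i) (C j)) ∧ n = (Finset.univ.biUnion C).card} :=
    ⟨C, hchain, hdisj, by rw [hcover, Finset.card_univ]⟩
  have hle : ∀ n ∈ {n : ℕ | ∃ C : Fin k → Finset V,
      (∀ i, IsChain (· ≤ ·) ((C i : Finset V) : Set V)) ∧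
      (∀ i j, i ≠ j → Disjoint (C i) (C j)) ∧ n = (Finset.univ.biUnion C).card},
      n ≤ Fintype.card V := by
    rintro n ⟨C, -, -, rfl⟩
    exact Finset.card_le_univ _
  exact le_antisymm (csSup_le ⟨_, hmem⟩ hle) (le_csSup ⟨_, hle⟩ hmem)

theorem isChain_coe_of_total {V : Type} [PartialOrder V] {s : Finset V}
    (h : ∀ x ∈ s, ∀ y ∈ s, x ≤ y ∨ y ≤ x) : IsChain (· ≤ ·) (s : Set V) :=
  fun x hx y hy _ => h x hx y hy

theorem disjoint_of_forall_not_mem {V : Type} {m : ℕ} {C : Fin m → Finset V}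
    (h : ∀ i j, i ≠ j → ∀ v ∈ C i, v ∉ C j) : ∀ i j, i ≠ j → Disjoint (C i) (C j) :=
  fun i j hij => Finset.disjoint_left.mpr fun {v} hv => h i j hij v hv

structure Grid where
  row : Fin 3
  idx : Fin 9
deriving DecidableEq, Fintype

namespace Grid

def Le (x y : Grid) : Prop :=
  (x.row = y.row ∧ x.idx ≤ y.idx) ∨
  (x.row = 0 ∧ y.row = 1 ∧ ((x.idx ≤ 2 ∧ 3 ≤ y.idx) ∨ (x.idx ≤ 6 ∧ 7 ≤ y.idx))) ∨
  (x.row = 1 ∧ y.row = 2 ∧ x.idx ≤ 5 ∧ 6 ≤ y.idx) ∨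
  (x.row = 0 ∧ y.row = 2 ∧ x.idx ≤ 2 ∧ 6 ≤ y.idx) ∨
  (x.row = 2 ∧ y.row = 0 ∧ x.idx ≤ 1 ∧ 5 ≤ y.idx) ∨
  (x.row = 2 ∧ y.row = 1 ∧ x.idx ≤ 1 ∧ 7 ≤ y.idx)

instance decidableRelLe : DecidableRel Le := fun x y => by
  unfold Le; infer_instance

instance : PartialOrder Grid where
  le := Le
  le_refl := by decide
  le_trans := by decide
  le_antisymm := by decide

instance : DecidableLE Grid := decidableRelLe

instance : DecidableLT Grid := decidableLTOfDecidableLE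

def rowChain (r : Fin 3) : Finset Grid := Finset.univ.filter (·.row = r)

def greedyChain : Fin 3 → Finset Grid :=
  ![{⟨0, 0⟩, ⟨0, 1⟩, ⟨0, 2⟩, ⟨1, 3⟩, ⟨1, 4⟩, ⟨1, 5⟩, ⟨2, 6⟩, ⟨2, 7⟩, ⟨2, 8⟩},
    {⟨2, 0⟩, ⟨2, 1⟩, ⟨0, 5⟩, ⟨0, 6⟩, ⟨1, 7⟩, ⟨1, 8⟩},
    {⟨2, 2⟩, ⟨2, 3⟩, ⟨2, 4⟩, ⟨2, 5⟩}]

/-- Every strict comparability increases `idx`, so `idx` alone ranks the first step; the later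
ranks compress `idx` on the rows where the earlier greedy chains left gaps (their values on
already covered elements, where `-` truncates, are irrelevant). -/
def rank : Fin 3 → Grid → ℕ :=
  ![fun v => v.idx,
    fun v => if v.row = 0 then v.idx - 3
      else if v.row = 1 then (if v.idx ≤ 2 then v.idx else v.idx - 3)
      else v.idx,
    fun v => if v.row = 0 then (if v.idx ≤ 4 then v.idx - 3 else v.idx - 5)
      else if v.row = 1 then (if v.idx ≤ 2 then v.idx else 3)
      else v.idx - 2]

theorem isChain_rowChain (r : Fin 3) : IsChain (· ≤ ·) (rowChain r : Set Grid) :=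
  isChain_coe_of_total (by revert r; decide)

theorem disjoint_rowChain : ∀ i j, i ≠ j → Disjoint (rowChain i) (rowChain j) :=
  disjoint_of_forall_not_mem (by decide)

theorem biUnion_rowChain : Finset.univ.biUnion rowChain = Finset.univ := by decide

theorem isChain_greedyChain (i : Fin 3) :
    IsChain (· ≤ ·) (greedyChain i : Set Grid) :=
  isChain_coe_of_total (by revert i; decide)

theorem disjoint_greedyChain : ∀ i j, i ≠ j → Disjoint (greedyChain i) (greedyChain j) :=
  disjoint_of_forall_not_mem (by decide)

theorem strictMonoOn_rank (i : Fin 3) :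
    StrictMonoOn (rank i) {v | ∀ j < i, v ∉ greedyChain j} := by
  have h : ∀ i : Fin 3, ∀ x y : Grid, (∀ j < i, x ∉ greedyChain j) →
      (∀ j < i, y ∉ greedyChain j) → x < y → rank i x < rank i y := by decide
  exact fun x hx y hy hxy => h i x y hx hy hxy

theorem rank_lt_card : ∀ i v, (∀ j < i, v ∉ greedyChain j) → rank i v < (greedyChain i).card := by
  decide

theorem greedyChainSeq_greedyChain : GreedyChainSeq Grid greedyChain :=
  greedyChainSeq_of_rank greedyChain isChain_greedyChain disjoint_greedyChain rank
    strictMonoOn_rank rank_lt_card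

theorem betaVal_three : betaVal Grid 3 = 27 :=
  betaVal_eq_card_of_cover rowChain isChain_rowChain disjoint_rowChain biUnion_rowChain

end Grid

open Grid in
/-- There is a 27-element finite poset with `β_3 = 27` admitting a greedy chain sequence
`C_1, C_2, C_3` with `|C_1| = 9`, `|C_2| = 6`, `|C_3| = 4`, thus covering exactly
`19 < (3/4)·β_3` elements. -/
theorem greedy_chains_example_k3 :
    ∃ (V : Type) (f : Fintype V) (d : DecidableEq V) (p : PartialOrder V),
      @GreedyChainsExample3 V f d p := by
  have hunion : (Finset.univ.biUnion greedyChain).card = 19 := by decide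
  refine ⟨Grid, inferInstance, inferInstance, inferInstance, by decide, betaVal_three,
    greedyChain, greedyChainSeq_greedyChain, by decide, by decide, by decide, hunion, ?_⟩
  rw [hunion, betaVal_three]
  norm_num
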